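/- arXiv:0810.2260 — 2 statements merged into one kernel-verified Lean document; each statement's English description precedes it below -/
import Mathlib

section
/- Let Ψ : ℂ → ℂ be a nonconstant holomorphic function, λ ∈ ℂ with |λ| > 1, and f : ℂ → ℂ holomorphic, satisfying the linearization equation Ψ(λz) = f(Ψ(z)) for all z, with Ψ(0) = p, f(p) = p, and Ψ'(0) ≠ 0. If for every n ≥ 1 and every critical point c of f one has fⁿ(c) ≠ p, then Ψ'(z) ≠ 0 for every z with Ψ(z) = p. -/
/-!
Differentiating `Ψ (λ w) = f (Ψ w)` gives `λ Ψ'(λ w) = f'(Ψ w) Ψ'(w)`. If `Ψ z = p` and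
`Ψ'(z) = 0`, walk back along `w_n = z λ⁻ⁿ`: since `fⁿ(Ψ w_n) = Ψ z = p`, the point `Ψ w_n` is not
critical for `f`, so `Ψ'` vanishes at every `w_n`. As `|λ| > 1`, `w_n → 0`, and continuity of `Ψ'`
forces `Ψ'(0) = 0`.
-/

open Filter Function Topology

section

variable {𝕜 : Type*} [NontriviallyNormedField 𝕜] {Ψ f : 𝕜 → 𝕜} {lam : 𝕜}

theorem Function.Semiconj.mul_deriv_mul_left (h : Semiconj Ψ (lam * ·) f) {w : 𝕜}
    (hf : DifferentiableAt 𝕜 f (Ψ w)) (hΨ : DifferentiableAt 𝕜 Ψ w) :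
    lam * deriv Ψ (lam * w) = deriv f (Ψ w) * deriv Ψ w := by
  rw [← smul_eq_mul, ← deriv_comp_mul_left, show (Ψ <| lam * ·) = f ∘ Ψ from funext h,
    deriv_comp w hf hΨ]

theorem Function.Semiconj.iterate_apply_mul_inv_pow (h : Semiconj Ψ (lam * ·) f)
    (hlam : lam ≠ 0) (z : 𝕜) (n : ℕ) : f^[n] (Ψ (z * lam⁻¹ ^ n)) = Ψ z := by
  rw [← h.iterate_right n, mul_left_iterate_apply, mul_left_comm, ← mul_pow,
    mul_inv_cancel₀ hlam, one_pow, mul_one]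

theorem Function.Semiconj.deriv_mul_inv_pow_eq_zero (h : Semiconj Ψ (lam * ·) f)
    (hΨ : Differentiable 𝕜 Ψ) (hf : Differentiable 𝕜 f) (hlam : lam ≠ 0) {p : 𝕜}
    (hcrit : ∀ n : ℕ, 1 ≤ n → ∀ c : 𝕜, deriv f c = 0 → f^[n] c ≠ p)
    {z : 𝕜} (hz : Ψ z = p) (hdz : deriv Ψ z = 0) (n : ℕ) :
    deriv Ψ (z * lam⁻¹ ^ n) = 0 := by
  induction n with
  | zero => simpa using hdz
  | succ n ih =>
    set w := z * lam⁻¹ ^ (n + 1) with hw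
    have hback : lam * w = z * lam⁻¹ ^ n := by
      rw [hw, pow_succ', mul_left_comm, mul_inv_cancel_left₀ hlam]
    have hchain := h.mul_deriv_mul_left (hf (Ψ w)) (hΨ w)
    rw [hback, ih, mul_zero, eq_comm, mul_eq_zero] at hchain
    have hnoncrit : deriv f (Ψ w) ≠ 0 := fun hc =>
      hcrit (n + 1) n.succ_pos (Ψ w) hc (hz ▸ h.iterate_apply_mul_inv_pow hlam z (n + 1))
    exact hchain.resolve_left hnoncrit

end

theorem tendsto_mul_inv_pow_nhds_zero {𝕜 : Type*} [NormedDivisionRing 𝕜] {lam : 𝕜}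
    (hlam : 1 < ‖lam‖) (z : 𝕜) : Tendsto (fun n : ℕ ↦ z * lam⁻¹ ^ n) atTop (𝓝 0) := by
  have hinv : ‖lam⁻¹‖ < 1 := by
    rw [norm_inv]
    exact inv_lt_one_of_one_lt₀ hlam
  simpa using (tendsto_pow_atTop_nhds_zero_of_norm_lt_one hinv).const_mul z

theorem stmt_0_general (Ψ f : ℂ → ℂ) (p lam : ℂ)
    (hΨdiff : Differentiable ℂ Ψ) (hfdiff : Differentiable ℂ f)
    (hlam : 1 < ‖lam‖)
    (hlin : ∀ z : ℂ, Ψ (lam * z) = f (Ψ z))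
    (hd0 : deriv Ψ 0 ≠ 0)
    (hcrit : ∀ n : ℕ, 1 ≤ n → ∀ c : ℂ, deriv f c = 0 → f^[n] c ≠ p) :
    ∀ z : ℂ, Ψ z = p → deriv Ψ z ≠ 0 := by
  intro z hz hdz
  have hlam0 : lam ≠ 0 := norm_pos_iff.mp (one_pos.trans hlam)
  have hvanish : ∀ n : ℕ, deriv Ψ (z * lam⁻¹ ^ n) = 0 :=
    Semiconj.deriv_mul_inv_pow_eq_zero hlin hΨdiff hfdiff hlam0 hcrit hz hdz
  have hcont : Continuous (deriv Ψ) := (hΨdiff.contDiff (n := 1)).continuous_deriv le_rfl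
  exact hd0 <| (isClosed_eq hcont continuous_const).mem_of_tendsto
    (tendsto_mul_inv_pow_nhds_zero hlam z) (Eventually.of_forall hvanish)

/-- If `p` is not in the forward orbit of any critical point of `f`, then the
Poincaré (linearizing) function `Ψ` has nonvanishing derivative at every
preimage of `p`. -/
theorem stmt_0 (Ψ f : ℂ → ℂ) (p lam : ℂ)
    (hΨdiff : Differentiable ℂ Ψ) (hfdiff : Differentiable ℂ f)
    (hΨnc : ∃ z w : ℂ, Ψ z ≠ Ψ w)
    (hlam : 1 < ‖lam‖)
    (hlin : ∀ z : ℂ, Ψ (lam * z) = f (Ψ z))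
    (hΨ0 : Ψ 0 = p) (hfp : f p = p) (hd0 : deriv Ψ 0 ≠ 0)
    (hcrit : ∀ n : ℕ, 1 ≤ n → ∀ c : ℂ, deriv f c = 0 → f^[n] c ≠ p) :
    ∀ z : ℂ, Ψ z = p → deriv Ψ z ≠ 0 :=
  stmt_0_general Ψ f p lam hΨdiff hfdiff hlam hlin hd0 hcrit
end

section
/- Let f : ℝ → ℝ be real-analytic near a critical point x₀ (f'(x₀) = 0, f not locally constant) with critical value c = f(x₀). Then for all sufficiently small ε > 0, at least one of the equations f(z) = c + ε or f(z) = c − ε has a non-real solution z in every complex neighborhood of x₀. -/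
open Complex Filter Topology

/-! Near the critical point, `f = c + a φ ^ m` with `m ≥ 2`, `a` real and nonzero, and `φ` a local
biholomorphism at `x₀` that is real on the real axis: `φ` is `z - x₀` times an analytic `m`-th root
of the (real, nonvanishing) quotient `(f - c) / (z - x₀) ^ m`. Solving `a φ(z) ^ m = ±ε` with
`φ(z) = (ε / |a|) ^ (1 / m) e ^ (iπ / m)`, which is not real because `m ≥ 2`, yields a point `z`
near `x₀`; it cannot be real, since `φ` takes real values there. -/

lemma eventually_im_eq_zero_imp_of_eventually_ofReal {P : ℂ → Prop} {x₀ : ℝ}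
    (h : ∀ᶠ x : ℝ in 𝓝 x₀, P x) : ∀ᶠ z : ℂ in 𝓝 (x₀ : ℂ), z.im = 0 → P z := by
  rw [isometry_ofReal.isEmbedding.isInducing.nhds_eq_comap, eventually_comap] at h
  filter_upwards [h] with z hz hz0
  have hre : (z.re : ℂ) = z := ext rfl (by simp [hz0])
  exact hre ▸ hz z.re hre

lemma AnalyticAt.exists_eventuallyEq_add_pow_mul_of_deriv_eq_zero {𝕜 : Type*}
    [NontriviallyNormedField 𝕜] {f : 𝕜 → 𝕜} {z₀ : 𝕜} (hf : AnalyticAt 𝕜 f z₀)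
    (hcrit : deriv f z₀ = 0) (hnc : ¬ ∀ᶠ z in 𝓝 z₀, f z = f z₀) :
    ∃ m, 2 ≤ m ∧ ∃ g : 𝕜 → 𝕜, AnalyticAt 𝕜 g z₀ ∧ g z₀ ≠ 0 ∧
      ∀ᶠ z in 𝓝 z₀, f z = f z₀ + (z - z₀) ^ m * g z := by
  obtain ⟨m, g, hg, hg0, hfg⟩ :=
    (hf.sub (analyticAt_const (v := f z₀))).exists_eventuallyEq_pow_smul_nonzero_iff.mpr
      (by simpa only [Pi.sub_apply, sub_eq_zero] using hnc)
  replace hfg : ∀ᶠ z in 𝓝 z₀, f z = f z₀ + (z - z₀) ^ m * g z :=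
    hfg.mono fun z hz => by rw [← smul_eq_mul, ← hz, Pi.sub_apply]; ring
  refine ⟨m, ?_, g, hg, hg0, hfg⟩
  have hm0 : m ≠ 0 := by
    rintro rfl
    simpa [hg0] using hfg.self_of_nhds
  have hm1 : m ≠ 1 := by
    rintro rfl
    have hderiv : HasDerivAt f (g z₀) z₀ := by
      have := (((hasDerivAt_id z₀).sub_const z₀).mul hg.differentiableAt.hasDerivAt).const_add
        (f z₀)
      simp only [id, sub_self, zero_mul, add_zero, one_mul] at this
      exact this.congr_of_eventuallyEq (hfg.mono fun z hz => by simp [hz])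
    exact hg0 (hderiv.deriv ▸ hcrit)
  omega

lemma eventually_im_eq_zero_of_eventuallyEq_add_pow_mul {f g : ℂ → ℂ} {x₀ : ℝ} {m : ℕ}
    (hg : ContinuousAt g x₀) (hreal : ∀ᶠ x : ℝ in 𝓝 x₀, (f x).im = 0)
    (hfg : ∀ᶠ z in 𝓝 (x₀ : ℂ), f z = f x₀ + (z - x₀) ^ m * g z) :
    ∀ᶠ x : ℝ in 𝓝 x₀, (g x).im = 0 := by
  have hofReal : Tendsto ((↑) : ℝ → ℂ) (𝓝 x₀) (𝓝 x₀) := continuous_ofReal.continuousAt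
  have hpunct : ∀ᶠ x : ℝ in 𝓝 x₀, x ≠ x₀ → (g x).im = 0 := by
    filter_upwards [hreal, hofReal.eventually hfg] with x hx hfx hne
    have him := congrArg im hfx
    rw [← ofReal_sub, ← ofReal_pow, add_im, im_ofReal_mul, hx, hreal.self_of_nhds] at him
    exact (mul_eq_zero.mp (by linarith)).resolve_left (pow_ne_zero _ (sub_ne_zero.mpr hne))
  have hx₀ : (g x₀).im = 0 :=
    (isClosed_eq continuous_im continuous_const).mem_of_tendsto
      (hg.tendsto.comp (hofReal.mono_left nhdsWithin_le_nhds))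
      ((eventually_nhdsWithin_iff (s := {x₀}ᶜ)).mpr hpunct)
  filter_upwards [hpunct] with x hx
  rcases eq_or_ne x x₀ with rfl | hne
  exacts [hx₀, hx hne]

lemma AnalyticAt.exists_eventuallyEq_mul_pow_of_real {g : ℂ → ℂ} {x₀ : ℝ} {m : ℕ}
    (hg : AnalyticAt ℂ g x₀) (hm : m ≠ 0) (hg0 : g x₀ ≠ 0)
    (hreal : ∀ᶠ x : ℝ in 𝓝 x₀, (g x).im = 0) :
    ∃ r : ℂ → ℂ, AnalyticAt ℂ r x₀ ∧ r x₀ = 1 ∧ (∀ᶠ z in 𝓝 (x₀ : ℂ), g z = g x₀ * r z ^ m) ∧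
      ∀ᶠ x : ℝ in 𝓝 x₀, (r x).im = 0 := by
  have hmC : (m : ℂ) ≠ 0 := Nat.cast_ne_zero.mpr hm
  refine ⟨fun z => Complex.exp (Complex.log (g z / g x₀) / m), ?_, by simp [hg0], ?_, ?_⟩
  · exact (((hg.div analyticAt_const hg0).clog (by simp [hg0, one_mem_slitPlane])).div
      analyticAt_const hmC).cexp
  · filter_upwards [hg.continuousAt.eventually_ne hg0] with z hz
    rw [← exp_nat_mul, mul_div_cancel₀ _ hmC, exp_log (div_ne_zero hz hg0),
      mul_div_cancel₀ _ hg0]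
  · have hre : Tendsto (fun x : ℝ => (g x / g x₀).re) (𝓝 x₀) (𝓝 1) := by
      have := (continuous_re.tendsto _).comp
        ((hg.continuousAt.div_const (g x₀)).comp continuous_ofReal.continuousAt).tendsto
      simpa [Function.comp_def, div_self hg0] using this
    filter_upwards [hreal, hre.eventually (eventually_gt_nhds one_pos)] with x hx hpos
    have harg : (Complex.log (g x / g x₀)).im = 0 := by
      rw [log_im, arg_eq_zero_iff]
      exact ⟨hpos.le, by simp [div_im, hx, hreal.self_of_nhds]⟩
    simp [exp_im, harg]

theorem AnalyticAt.exists_eventuallyEq_add_mul_pow_of_real {f : ℂ → ℂ} {x₀ : ℝ}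
    (hf : AnalyticAt ℂ f x₀) (hreal : ∀ᶠ x : ℝ in 𝓝 x₀, (f x).im = 0)
    (hcrit : deriv f x₀ = 0) (hnc : ¬ ∀ᶠ z in 𝓝 (x₀ : ℂ), f z = f x₀) :
    ∃ m, 2 ≤ m ∧ ∃ a : ℝ, a ≠ 0 ∧ ∃ φ : ℂ → ℂ, map φ (𝓝 (x₀ : ℂ)) = 𝓝 0 ∧
      (∀ᶠ z in 𝓝 (x₀ : ℂ), f z = f x₀ + a * φ z ^ m) ∧ ∀ᶠ x : ℝ in 𝓝 x₀, (φ x).im = 0 := by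
  obtain ⟨m, hm, g, hg, hg0, hfg⟩ := hf.exists_eventuallyEq_add_pow_mul_of_deriv_eq_zero hcrit hnc
  have hgreal := eventually_im_eq_zero_of_eventuallyEq_add_pow_mul hg.continuousAt hreal hfg
  obtain ⟨r, hr, hr0, hgr, hrreal⟩ :=
    hg.exists_eventuallyEq_mul_pow_of_real (by omega : m ≠ 0) hg0 hgreal
  have ha : g x₀ = ((g x₀).re : ℂ) := ext rfl (by simp [hgreal.self_of_nhds])
  refine ⟨m, hm, (g x₀).re, fun h => hg0 (by rw [ha, h, ofReal_zero]), fun z => (z - x₀) * r z,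
    ?_, ?_, ?_⟩
  · have hφan : AnalyticAt ℂ (fun z : ℂ => (z - x₀) * r z) x₀ :=
      (analyticAt_id.sub analyticAt_const).mul hr
    have hφ : deriv (fun z : ℂ => (z - x₀) * r z) x₀ = 1 := by
      rw [deriv_fun_mul (by fun_prop) hr.differentiableAt]
      simp [hr0]
    simpa using hφan.hasStrictDerivAt.map_nhds_eq (hφ ▸ one_ne_zero)
  · filter_upwards [hfg, hgr] with z hfz hgz
    rw [hfz, hgz, ← ha, mul_pow]
    ring
  · filter_upwards [hrreal] with x hx
    simp [hx]

lemma exists_tendsto_zero_im_ne_zero_pow_eq_neg {m : ℕ} (hm : 2 ≤ m) :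
    ∃ w : ℝ → ℂ, Tendsto w (𝓝 0) (𝓝 0) ∧ ∀ s > 0, (w s).im ≠ 0 ∧ w s ^ m = -s := by
  have hm0 : (0 : ℝ) < m := by positivity
  refine ⟨fun s => (s ^ (m⁻¹ : ℝ) : ℝ) * exp ((Real.pi / m : ℝ) * I), ?_, fun s hs => ⟨?_, ?_⟩⟩
  · have hroot : ContinuousAt (fun s : ℝ => s ^ (m⁻¹ : ℝ)) 0 :=
      Real.continuousAt_rpow_const 0 _ (Or.inr (inv_pos.mpr hm0).le)
    have := ((continuous_ofReal.continuousAt.comp hroot).mul_const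
      (exp ((Real.pi / m : ℝ) * I))).tendsto
    simpa [Function.comp_def, Real.zero_rpow (inv_pos.mpr hm0).ne'] using this
  · have hsin : 0 < Real.sin (Real.pi / m) := Real.sin_pos_of_pos_of_lt_pi (by positivity)
      (div_lt_self Real.pi_pos (by exact_mod_cast hm))
    rw [im_ofReal_mul, exp_ofReal_mul_I_im]
    exact (mul_pos (Real.rpow_pos_of_pos hs _) hsin).ne'
  · have hmC : (m : ℂ) ≠ 0 := by exact_mod_cast hm0.ne'
    have hangle : (m : ℂ) * ((Real.pi / m : ℝ) * I) = Real.pi * I := by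
      push_cast
      field_simp
    rw [mul_pow, ← ofReal_pow, Real.rpow_inv_natCast_pow hs.le (by omega), ← exp_nat_mul,
      hangle, exp_pi_mul_I, mul_neg_one]

lemma exists_tendsto_zero_im_ne_zero_mul_pow_eq {m : ℕ} (hm : 2 ≤ m) {a : ℝ} (ha : a ≠ 0) :
    ∃ w : ℝ → ℂ, Tendsto w (𝓝 0) (𝓝 0) ∧
      ∀ ε > 0, (w ε).im ≠ 0 ∧ (a * w ε ^ m = ε ∨ a * w ε ^ m = -ε) := by
  obtain ⟨w, hw0, hw⟩ := exists_tendsto_zero_im_ne_zero_pow_eq_neg hm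
  refine ⟨fun ε => w (ε / |a|), ?_, fun ε hε => ?_⟩
  · exact hw0.comp (by simpa using (continuous_id.div_const |a|).tendsto 0)
  · obtain ⟨him, hpow⟩ := hw (ε / |a|) (div_pos hε (abs_pos.mpr ha))
    have haC : (a : ℂ) ≠ 0 := ofReal_ne_zero.mpr ha
    refine ⟨him, ?_⟩
    rw [hpow]
    rcases ha.lt_or_gt with hneg | hpos
    · left
      rw [abs_of_neg hneg]
      push_cast
      field_simp [haC]
    · right
      rw [abs_of_pos hpos]
      push_cast
      field_simp [haC]

/-- Near a critical point `x₀` of a nonconstant real-analytic function `f` with critical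
value `c`, for every neighborhood `U` of `x₀` and all sufficiently small `ε > 0`, at least
one of the equations `f(z) = c + ε`, `f(z) = c - ε` has a non-real solution in `U`. -/
theorem stmt_15 (f : ℂ → ℂ) (x₀ c : ℝ)
    (han : AnalyticAt ℂ f ((x₀ : ℝ) : ℂ))
    (hreal : ∀ᶠ x : ℝ in nhds x₀, (f ((x : ℝ) : ℂ)).im = 0)
    (hcrit : deriv f ((x₀ : ℝ) : ℂ) = 0)
    (hc : f ((x₀ : ℝ) : ℂ) = ((c : ℝ) : ℂ))
    (hnc : ¬ ∀ᶠ z : ℂ in nhds ((x₀ : ℝ) : ℂ), f z = ((c : ℝ) : ℂ)) :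
    ∀ U ∈ nhds ((x₀ : ℝ) : ℂ), ∀ᶠ ε : ℝ in nhdsWithin 0 (Set.Ioi 0),
      ∃ z ∈ U, z.im ≠ 0 ∧ (f z = (c : ℂ) + (ε : ℂ) ∨ f z = (c : ℂ) - (ε : ℂ)) := by
  intro U hU
  obtain ⟨m, hm, a, ha, φ, hφmap, hfφ, hφreal⟩ :=
    han.exists_eventuallyEq_add_mul_pow_of_real hreal hcrit (hc ▸ hnc)
  obtain ⟨w, hw0, hw⟩ := exists_tendsto_zero_im_ne_zero_mul_pow_eq hm ha
  have hV : φ '' {z | z ∈ U ∧ f z = c + a * φ z ^ m ∧ (z.im = 0 → (φ z).im = 0)} ∈ 𝓝 0 :=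
    hφmap ▸ image_mem_map (Eventually.and hU
      ((hc ▸ hfφ).and (eventually_im_eq_zero_imp_of_eventually_ofReal hφreal)))
  filter_upwards [self_mem_nhdsWithin, (hw0.mono_left nhdsWithin_le_nhds).eventually hV]
    with ε hε ⟨z, ⟨hzU, hfz, hzreal⟩, hφz⟩
  obtain ⟨him, hpow⟩ := hw ε hε
  refine ⟨z, hzU, fun h => him (hφz ▸ hzreal h), ?_⟩
  rw [hfz, hφz]
  rcases hpow with h | h
  · exact .inl (by rw [h])
  · exact .inr (by rw [h, sub_eq_add_neg])
end
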